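/- Axiom (T) is valid in 𝓜(Tm): for every a ∈ V, every x ∈ □̃₁ a, and every y ∈ x →̃ a, we have y ∈ D = {T, t}. -/

import Mathlib

inductive MV | T | t | f | F
deriving DecidableEq

open MV

def D : Set MV := {T, t}

def mneg : MV → MV
  | T => F | t => f | f => t | F => T

def mimp : MV → MV → Set MV
  | T, b => {b}
  | t, T => {T} | t, t => {T, t} | t, f => {f} | t, F => {f}
  | f, T => {T} | f, t => {T, t} | f, f => {T, t} | f, F => {t}
  | F, _ => {T}

def box1 : MV → Set MV
  | T => {T, t} | _ => {f, F}

def box2 : MV → Set MV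
  | T => {T} | _ => {f, F}

def box3 : MV → Set MV
  | T => {T} | _ => {F}

theorem mimp_T_right (x : MV) : mimp x T = {T} := by
  cases x <;> rfl

theorem mimp_subset_D_of_notMem_D {x : MV} (hx : x ∉ D) (b : MV) : mimp x b ⊆ D := by
  cases x <;> cases b <;> simp_all [mimp, D]

theorem notMem_D_of_mem_box1_of_ne_T {a x : MV} (ha : a ≠ T) (hx : x ∈ box1 a) : x ∉ D := by
  cases a <;> cases x <;> simp_all [box1, D]

theorem axT_valid :
    ∀ a x y : MV, x ∈ box1 a → y ∈ mimp x a → y ∈ D := by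
  intro a x y hx hy
  by_cases ha : a = T
  · subst ha
    rw [mimp_T_right, Set.mem_singleton_iff] at hy
    exact hy ▸ Or.inl rfl
  · exact mimp_subset_D_of_notMem_D (notMem_D_of_mem_box1_of_ne_T ha hx) a hy
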